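/- Let σ > 0 and β ≥ 0, and let r_1, …, r_m and s_1, …, s_m be real numbers such that for every t, 0 ≤ r_t ≤ 2√β · s_t and 0 ≤ s_t ≤ 1. Then Σ_{t=1}^m r_t² ≤ (4β / log(1+σ⁻²)) · Σ_{t=1}^m log(1 + σ⁻² s_t²). -/
import Mathlib

lemma log_aux {c u : ℝ} (hc : 0 ≤ c) (hu0 : 0 ≤ u) (hu1 : u ≤ 1) :
    u * Real.log (1 + c) ≤ Real.log (1 + c * u) := by
  have h1 : (0:ℝ) < 1 + c := by linarith
  have h := rpow_one_add_le_one_add_mul_self (s := c) (by linarith) hu0 hu1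
  have hlog : Real.log ((1 + c) ^ u) ≤ Real.log (1 + u * c) :=
    Real.log_le_log (Real.rpow_pos_of_pos h1 u) h
  rwa [Real.log_rpow h1, mul_comm u c] at hlog

/-- Deterministic chain of inequalities (equations (30)–(32)) in Lemma 6 of the
paper: if `0 ≤ r t ≤ 2√β · s t` and `0 ≤ s t ≤ 1` for all `t`, then
`∑ r t² ≤ (4β / log(1+σ⁻²)) · ∑ log(1 + σ⁻² s t²)`. -/
theorem stmt_7 (σ β : ℝ) (hσ : 0 < σ) (hβ : 0 ≤ β) (m : ℕ) (r s : Fin m → ℝ)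
    (hr : ∀ t, 0 ≤ r t ∧ r t ≤ 2 * Real.sqrt β * s t)
    (hs : ∀ t, 0 ≤ s t ∧ s t ≤ 1) :
    ∑ t, (r t) ^ 2 ≤
      (4 * β / Real.log (1 + σ⁻¹ ^ 2)) * ∑ t, Real.log (1 + σ⁻¹ ^ 2 * (s t) ^ 2) := by
  set c := σ⁻¹ ^ 2 with hc
  have hcpos : 0 < c := by positivity
  have hLpos : 0 < Real.log (1 + c) := Real.log_pos (by linarith)
  rw [Finset.mul_sum]
  apply Finset.sum_le_sum
  intro t _
  have h1 := (hr t).1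
  have h2 := (hr t).2
  have hs0 := (hs t).1
  have hs1 := (hs t).2
  have hrsq : (r t) ^ 2 ≤ 4 * β * (s t) ^ 2 := by
    have := mul_self_le_mul_self h1 h2
    have hb : Real.sqrt β ^ 2 = β := Real.sq_sqrt hβ
    nlinarith [this, hb]
  have hu : (s t) ^ 2 * Real.log (1 + c) ≤ Real.log (1 + c * (s t) ^ 2) := by
    apply log_aux hcpos.le (by positivity)
    nlinarith
  calc (r t) ^ 2 ≤ 4 * β * (s t) ^ 2 := hrsq
    _ ≤ 4 * β * (Real.log (1 + c * (s t) ^ 2) / Real.log (1 + c)) := by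
        apply mul_le_mul_of_nonneg_left _ (by positivity)
        rw [le_div_iff₀ hLpos]; exact hu
    _ = 4 * β / Real.log (1 + c) * Real.log (1 + c * (s t) ^ 2) := by ring
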